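/- arXiv:1208.5076 — 7 statements merged into one kernel-verified Lean document; each statement's English description precedes it below -/
import Mathlib

section
/- Consider the best-response opinion dynamics on a finite simple connected graph G with stubbornness parameters K_i ≥ 0, fully stubborn set S_F, and at least one stubborn agent. Let F = (I − A)^{−1} B. Then all entries of F are nonnegative, each row of F sums to 1, and F_{ij} = 0 whenever j is not stubborn (j ∉ S_F and K_j = 0). Consequently, for every agent i the equilibrium opinion x_i(∞) = Σ_j F_{ij} x_j(0) is a convex combination of the initial opinions of the stubborn agents, and the initial opinions of non-stubborn agents have no effect on the equilibrium. -/
open Matrix Finset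

/-!
A discrete minimum principle drives everything. Let `A ≥ 0` be substochastic with some row
summing to less than one, and with `A i j > 0` along every edge of the connected graph `G`
leaving a row that sums to one. If `u = A u + b` with `b ≥ 0` and `u` had a negative minimum,
the equation would spread that minimum along edges through rows summing to one, and so reach
the leaking row, which is impossible. Applied to `±v` with `b = 0` this makes `1 - A`
invertible; applied to the columns of `F`, which satisfy `F = A F + B`, it gives `F ≥ 0`.
Since the rows of `A` and `B` together sum to one, `(1 - A) 𝟙 = B 𝟙`, hence `F 𝟙 = 𝟙`.
Finally `F = (1 - A)⁻¹ B` with `B` diagonal vanishes on the columns where the diagonal of `B`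
does, namely at the non-stubborn agents.
-/

theorem SimpleGraph.Reachable.mem_of_adj_closed {V : Type*} {G : SimpleGraph V} {s : Set V}
    (hs : ∀ i ∈ s, ∀ j, G.Adj i j → j ∈ s) {u v : V} (huv : G.Reachable u v) (hu : u ∈ s) :
    v ∈ s := by
  obtain ⟨p⟩ := huv
  induction p with
  | nil => exact hu
  | cons h _ ih => exact ih (hs _ hu _ h)

namespace Matrix

variable {ι : Type*} [Fintype ι]

structure IsLeakySubstochastic (G : SimpleGraph ι) (A : Matrix ι ι ℝ) : Prop where
  nonneg : ∀ i j, 0 ≤ A i j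
  sum_le_one : ∀ i, ∑ j, A i j ≤ 1
  pos_of_adj : ∀ i j, ∑ k, A i k = 1 → G.Adj i j → 0 < A i j
  exists_sum_lt_one : ∃ i, ∑ j, A i j < 1

namespace IsLeakySubstochastic

variable {G : SimpleGraph ι} {A : Matrix ι ι ℝ}

theorem nonneg_of_eq_mulVec_add (hA : IsLeakySubstochastic G A) (hconn : G.Connected)
    {u b : ι → ℝ} (hb : 0 ≤ b) (hu : u = A *ᵥ u + b) : 0 ≤ u := by
  obtain ⟨i₁, hi₁⟩ := hA.exists_sum_lt_one
  obtain ⟨i₀, -, hmin⟩ := exists_min_image univ u ⟨i₁, mem_univ _⟩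
  replace hmin : ∀ j, u i₀ ≤ u j := fun j => hmin j (mem_univ j)
  by_contra hneg
  have hm : u i₀ < 0 := by
    obtain ⟨i, hi⟩ := not_forall.mp hneg
    exact (hmin i).trans_lt (not_le.mp hi)
  -- At a minimum point, `u = A u + b` forces a full row sum and the same value at all neighbours.
  have hflat : ∀ i, u i = u i₀ → ∑ j, A i j = 1 ∧ ∀ j, G.Adj i j → u j = u i₀ := by
    intro i hi
    have hgap : ∀ j ∈ univ, 0 ≤ A i j * (u j - u i₀) :=
      fun j _ => mul_nonneg (hA.nonneg i j) (sub_nonneg.2 (hmin j))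
    have hsplit : u i₀ * (1 - ∑ j, A i j) = ∑ j, A i j * (u j - u i₀) + b i := by
      have hui : u i = ∑ j, A i j * u j + b i := by simpa [mulVec, dotProduct] using congrFun hu i
      simp only [mul_sub, sum_sub_distrib, ← sum_mul]
      linarith
    have hlhs : u i₀ * (1 - ∑ j, A i j) ≤ 0 :=
      mul_nonpos_of_nonpos_of_nonneg hm.le (sub_nonneg.2 (hA.sum_le_one i))
    have hrhs := sum_nonneg hgap
    have hbi : 0 ≤ b i := hb i
    have hzero : u i₀ * (1 - ∑ j, A i j) = 0 := le_antisymm hlhs (by linarith)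
    have hgap0 : ∑ j, A i j * (u j - u i₀) = 0 := by linarith
    have hfull : ∑ j, A i j = 1 := by
      linarith [(mul_eq_zero.1 hzero).resolve_left hm.ne]
    refine ⟨hfull, fun j hij => ?_⟩
    have hterm := (sum_eq_zero_iff_of_nonneg hgap).1 hgap0 j (mem_univ j)
    linarith [(mul_eq_zero.1 hterm).resolve_left (hA.pos_of_adj i j hfull hij).ne']
  have hall : ∀ i, u i = u i₀ := fun i =>
    (hconn.preconnected i₀ i).mem_of_adj_closed (s := {i | u i = u i₀})
      (fun i hi j hij => (hflat i hi).2 j hij) rfl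
  exact hi₁.ne (hflat i₁ (hall i₁)).1

theorem isUnit_det_one_sub [DecidableEq ι] (hA : IsLeakySubstochastic G A)
    (hconn : G.Connected) : IsUnit (1 - A).det := by
  have hker : ∀ v : ι → ℝ, (1 - A) *ᵥ v = 0 → 0 ≤ v := fun v hv =>
    hA.nonneg_of_eq_mulVec_add hconn le_rfl <| by
      rw [sub_mulVec, one_mulVec, sub_eq_zero] at hv
      rw [add_zero, ← hv]
  rw [← isUnit_iff_isUnit_det, ← mulVec_injective_iff_isUnit]
  intro x y hxy
  have hv : (1 - A) *ᵥ (x - y) = 0 := by rw [mulVec_sub, hxy, sub_self]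
  have hneg : (1 - A) *ᵥ -(x - y) = 0 := by rw [mulVec_neg, hv, neg_zero]
  exact sub_eq_zero.1 (le_antisymm (neg_nonneg.1 (hker _ hneg)) (hker _ hv))

theorem inv_one_sub_mul_nonneg [DecidableEq ι] (hA : IsLeakySubstochastic G A)
    (hconn : G.Connected) {B : Matrix ι ι ℝ} (hB : ∀ i j, 0 ≤ B i j) (i j : ι) :
    0 ≤ ((1 - A)⁻¹ * B) i j := by
  set F := (1 - A)⁻¹ * B
  have hF : F = A * F + B := by
    have h := (1 - A).mul_nonsing_inv_cancel_left B (hA.isUnit_det_one_sub hconn)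
    rwa [sub_mul, one_mul, sub_eq_iff_eq_add'] at h
  refine hA.nonneg_of_eq_mulVec_add hconn (u := fun i => F i j) (b := fun i => B i j)
    (fun i => hB i j) ?_ i
  funext i
  simpa [mulVec, dotProduct, mul_apply] using congrFun (congrFun hF i) j

end IsLeakySubstochastic

theorem sum_inv_one_sub_mul_eq_one [DecidableEq ι] {A B : Matrix ι ι ℝ}
    (hA : IsUnit (1 - A).det) (hAB : ∀ i, ∑ j, A i j + ∑ j, B i j = 1) (i : ι) :
    ∑ j, ((1 - A)⁻¹ * B) i j = 1 := by
  have hone : B *ᵥ 1 = (1 - A) *ᵥ 1 := by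
    funext k
    simp only [mulVec, dotProduct, sub_apply, Pi.one_apply, mul_one, sum_sub_distrib, one_apply,
      sum_ite_eq, mem_univ, if_true]
    linarith [hAB k]
  have h : ((1 - A)⁻¹ * B) *ᵥ 1 = 1 := by
    rw [← mulVec_mulVec, hone, mulVec_mulVec, nonsing_inv_mul _ hA, one_mulVec]
  simpa [mulVec, dotProduct] using congrFun h i

theorem mulVec_eq_mulVec_of_col_eq_zero {M : Matrix ι ι ℝ} {x y : ι → ℝ}
    (h : ∀ j, x j ≠ y j → ∀ i, M i j = 0) : M *ᵥ x = M *ᵥ y := by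
  funext i
  refine sum_congr rfl fun j _ => ?_
  by_cases hj : x j = y j
  · rw [hj]
  · simp [h j hj i]

end Matrix

namespace SimpleGraph

variable {V : Type*} [Fintype V] (G : SimpleGraph V) [DecidableRel G.Adj] (K : V → ℝ)
  (SF : Finset V)

/-- The matrix `A` of the best-response dynamics. -/
noncomputable def neighborWeights [DecidableEq V] : Matrix V V ℝ :=
  Matrix.of fun i j =>
    if i ∈ SF then 0 else if G.Adj i j then 1 / ((G.degree i : ℝ) + K i) else 0

/-- The diagonal of the matrix `B` of the best-response dynamics. -/
noncomputable def selfWeight [DecidableEq V] (i : V) : ℝ :=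
  if i ∈ SF then 1 else K i / ((G.degree i : ℝ) + K i)

variable {G K SF}

theorem degree_add_pos (hconn : G.Connected) (hK : ∀ i, 0 ≤ K i)
    (hstub : SF.Nonempty ∨ ∃ i, 0 < K i) {i : V} (hi : i ∉ SF) :
    0 < (G.degree i : ℝ) + K i := by
  rcases (hK i).lt_or_eq with hKi | hKi
  · exact add_pos_of_nonneg_of_pos (Nat.cast_nonneg _) hKi
  obtain ⟨s, hsi⟩ : ∃ s, s ≠ i := by
    rcases hstub with ⟨s, hs⟩ | ⟨s, hKs⟩
    · exact ⟨s, ne_of_mem_of_not_mem hs hi⟩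
    · exact ⟨s, by rintro rfl; linarith⟩
  rw [← hKi, add_zero, Nat.cast_pos]
  exact (hconn.preconnected i s).degree_pos_left hsi.symm

theorem neighborWeights_nonneg [DecidableEq V] (hK : ∀ i, 0 ≤ K i) (i j : V) :
    0 ≤ neighborWeights G K SF i j := by
  simp only [neighborWeights, of_apply]
  split_ifs
  · exact le_rfl
  · exact div_nonneg zero_le_one (add_nonneg (Nat.cast_nonneg _) (hK i))
  · exact le_rfl

variable [DecidableEq V]

theorem sum_neighborWeights (i : V) :
    ∑ j, neighborWeights G K SF i j =
      if i ∈ SF then 0 else (G.degree i : ℝ) / ((G.degree i : ℝ) + K i) := by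
  by_cases hi : i ∈ SF
  · simp [neighborWeights, hi]
  · simp only [neighborWeights, of_apply, hi, if_false]
    rw [← sum_filter, ← neighborFinset_eq_filter, sum_const, card_neighborFinset_eq_degree,
      nsmul_eq_mul, mul_one_div]

theorem isLeakySubstochastic_neighborWeights (hconn : G.Connected) (hK : ∀ i, 0 ≤ K i)
    (hstub : SF.Nonempty ∨ ∃ i, 0 < K i) : (neighborWeights G K SF).IsLeakySubstochastic G where
  nonneg := neighborWeights_nonneg hK
  sum_le_one i := by
    rw [sum_neighborWeights]
    split_ifs
    · exact zero_le_one
    · exact div_le_one_of_le₀ (le_add_of_nonneg_right (hK i))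
        (add_nonneg (Nat.cast_nonneg _) (hK i))
  pos_of_adj i j hsum hij := by
    by_cases hi : i ∈ SF
    · simp [sum_neighborWeights, hi] at hsum
    · simpa [neighborWeights, hi, hij] using degree_add_pos hconn hK hstub hi
  exists_sum_lt_one := by
    rcases hstub with ⟨s, hs⟩ | ⟨s, hKs⟩
    · exact ⟨s, by simp [sum_neighborWeights, hs]⟩
    · refine ⟨s, ?_⟩
      rw [sum_neighborWeights]
      split_ifs
      · exact zero_lt_one
      · exact (div_lt_one (add_pos_of_nonneg_of_pos (Nat.cast_nonneg _) hKs)).2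
          (lt_add_of_pos_right _ hKs)

theorem selfWeight_nonneg (hK : ∀ i, 0 ≤ K i) (i : V) : 0 ≤ selfWeight G K SF i := by
  unfold selfWeight
  split_ifs
  · exact zero_le_one
  · exact div_nonneg (hK i) (add_nonneg (Nat.cast_nonneg _) (hK i))

theorem sum_neighborWeights_add_selfWeight (hconn : G.Connected) (hK : ∀ i, 0 ≤ K i)
    (hstub : SF.Nonempty ∨ ∃ i, 0 < K i) (i : V) :
    ∑ j, neighborWeights G K SF i j + selfWeight G K SF i = 1 := by
  rw [sum_neighborWeights, selfWeight]
  split_ifs with hi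
  · exact zero_add 1
  · rw [← add_div, div_self (degree_add_pos hconn hK hstub hi).ne']

theorem selfWeight_eq_zero {i : V} (hi : i ∉ SF) (hKi : K i = 0) : selfWeight G K SF i = 0 := by
  simp [selfWeight, hi, hKi]

end SimpleGraph

/-- With at least one stubborn agent, `F = (I − A)⁻¹ B` has nonnegative
entries, rows summing to 1, and zero columns at non-stubborn agents; hence the equilibrium
`x(∞) = F x(0)` is a convex combination of the initial opinions of the stubborn agents and
does not depend on the initial opinions of the non-stubborn agents. -/
theorem stmt6 {n : ℕ} (G : SimpleGraph (Fin n)) [DecidableRel G.Adj]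
    (hconn : G.Connected)
    (K : Fin n → ℝ) (hK : ∀ i, 0 ≤ K i) (SF : Finset (Fin n))
    (A B : Matrix (Fin n) (Fin n) ℝ)
    (hA : ∀ i j, A i j = if i ∈ SF then 0
        else if G.Adj i j then 1 / ((G.degree i : ℝ) + K i) else 0)
    (hB : ∀ i j, B i j = if i = j then
        (if i ∈ SF then 1 else K i / ((G.degree i : ℝ) + K i)) else 0)
    (hstub : SF.Nonempty ∨ ∃ i, 0 < K i)
    (F : Matrix (Fin n) (Fin n) ℝ) (hF : F = (1 - A)⁻¹ * B) :
    (∀ i j, 0 ≤ F i j) ∧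
    (∀ i, ∑ j, F i j = 1) ∧
    (∀ j, j ∉ SF → K j = 0 → ∀ i, F i j = 0) ∧
    (∀ x0 x0' : Fin n → ℝ, (∀ j, (j ∈ SF ∨ 0 < K j) → x0 j = x0' j) →
      F.mulVec x0 = F.mulVec x0') := by
  obtain rfl : A = G.neighborWeights K SF := Matrix.ext hA
  obtain rfl : B = diagonal (G.selfWeight K SF) := by
    ext i j
    rw [hB, diagonal_apply]
    rfl
  have hleak := G.isLeakySubstochastic_neighborWeights hconn hK hstub
  have hcol : ∀ j, j ∉ SF → K j = 0 → ∀ i, F i j = 0 := fun j hj hKj i => by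
    rw [hF, mul_diagonal, G.selfWeight_eq_zero hj hKj, mul_zero]
  refine ⟨fun i j => ?_, fun i => ?_, hcol, fun x0 x0' hx => ?_⟩
  · rw [hF]
    refine hleak.inv_one_sub_mul_nonneg hconn (fun k l => ?_) i j
    rw [diagonal_apply]
    split_ifs
    exacts [G.selfWeight_nonneg hK k, le_rfl]
  · rw [hF]
    refine sum_inv_one_sub_mul_eq_one (hleak.isUnit_det_one_sub hconn) (fun k => ?_) i
    simpa [diagonal_apply] using G.sum_neighborWeights_add_selfWeight hconn hK hstub k
  · refine mulVec_eq_mulVec_of_col_eq_zero fun j hj => hcol j ?_ ?_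
    · exact fun hjS => hj (hx j (Or.inl hjS))
    · exact ((hK j).eq_or_lt.resolve_right fun hKj => hj (hx j (Or.inr hKj))).symm
end

section
/- Let Ĝ be a finite connected weighted graph on vertex set V̂ with symmetric positive edge weights, D ⊊ V̂ a nonempty boundary set, Ã the substochastic matrix on V̂ ∖ D with Ã_{ij} = w_{ij}/w_i, and λ its largest eigenvalue. Suppose for each vertex i ∈ V̂ ∖ D a non-self-intersecting path γ_i of oriented edges of Ĝ from i to some vertex of D is given, and let |γ_i|_w = Σ_{(s,t)∈γ_i} 1/w_{st}. For each oriented edge (x,y) of Ĝ define ξ(x,y) = Σ_{i : (x,y) ∈ γ_i} w_i |γ_i|_w, and let ξ = max_{(x,y)} ξ(x,y). Then 1/(1 − λ) ≤ 2ξ; equivalently 1 − λ ≥ 1/(2ξ). -/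
open Matrix Finset

/-!
Let `F` be an eigenfunction of `Ã` for `λ`, extended by zero on `D`. Symmetry of the weights
turns the Dirichlet energy `∑ w_xy (F x - F y)²` into `2 (1 - λ) ∑ w_x F_x²`. Since `F` vanishes
at the end of `γ_i`, `F_i` telescopes along `γ_i`, and Cauchy–Schwarz with weights `1 / w_e`
gives `F_i² ≤ |γ_i|_w ∑_{(x,y) ∈ γ_i} w_xy (F x - F y)²`. Multiplying by `w_i`, summing over `i` and
exchanging the sums bounds `∑ w_i F_i²` by `ξ` times the energy, i.e. `1 ≤ 2 ξ (1 - λ)`.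
-/

namespace List

variable {α : Type*}

theorem IsChain.rel_of_mem_consecutivePairs {R : α → α → Prop} :
    ∀ {l : List α}, l.IsChain R → ∀ {e : α × α}, e ∈ l.consecutivePairs → R e.1 e.2
  | a :: b :: l, h, e, he => by
    obtain ⟨hab, h⟩ := isChain_cons_cons.mp h
    rcases mem_cons.mp he with rfl | he
    · exact hab
    · exact h.rel_of_mem_consecutivePairs he

theorem Nodup.consecutivePairs : ∀ {l : List α}, l.Nodup → l.consecutivePairs.Nodup
  | [], _ | [_], _ => by simp [List.consecutivePairs]
  | a :: b :: l, h => by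
    refine nodup_cons.mpr ⟨fun hmem => (nodup_cons.mp h).1 (of_mem_zip hmem).1, ?_⟩
    exact (nodup_cons.mp h).2.consecutivePairs

theorem sum_map_consecutivePairs_sub {M : Type*} [AddCommGroup M] (F : α → M) :
    ∀ {l : List α} {i j : α}, l.head? = some i → l.getLast? = some j →
      (l.consecutivePairs.map fun e => F e.1 - F e.2).sum = F i - F j
  | [], _, _, hi, _ => by simp at hi
  | [a], i, j, hi, hj => by simp_all [consecutivePairs]
  | a :: b :: l, i, j, hi, hj => by
    obtain rfl : a = i := by simpa using hi
    have ih := sum_map_consecutivePairs_sub F (l := b :: l) rfl (by simpa using hj)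
    simp only [consecutivePairs, tail_cons, zip_cons_cons, map_cons, sum_cons] at ih ⊢
    rw [ih]
    abel

end List

theorem Matrix.exists_mulVec_eq_smul_of_mem_spectrum {n K : Type*} [Fintype n] [DecidableEq n]
    [Field K] {A : Matrix n n K} {μ : K} (h : μ ∈ spectrum K A) : ∃ v ≠ 0, A *ᵥ v = μ • v := by
  rw [← spectrum_toLin'] at h
  obtain ⟨v, hv⟩ := (Module.End.hasEigenvalue_iff_mem_spectrum.mpr h).exists_hasEigenvector
  exact ⟨v, hv.2, by rw [← toLin'_apply, hv.apply_eq_smul]⟩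

noncomputable section

variable {V : Type*}

def pathResistance (w : V → V → ℝ) (l : List V) : ℝ :=
  (l.consecutivePairs.map fun e => 1 / w e.1 e.2).sum

theorem sq_sub_le_pathResistance_mul_sum [DecidableEq V] (w : V → V → ℝ) (F : V → ℝ)
    {l : List V} {i j : V} (hi : l.head? = some i) (hj : l.getLast? = some j)
    (hl : l.IsChain fun x y => 0 < w x y) (hnd : l.Nodup) :
    (F i - F j) ^ 2 ≤
      pathResistance w l * ∑ e ∈ l.consecutivePairs.toFinset, w e.1 e.2 * (F e.1 - F e.2) ^ 2 := by
  have hpos : ∀ e ∈ l.consecutivePairs.toFinset, 0 < w e.1 e.2 := fun e he =>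
    hl.rel_of_mem_consecutivePairs (List.mem_toFinset.mp he)
  rw [pathResistance, ← List.sum_map_consecutivePairs_sub F hi hj,
    ← List.sum_toFinset _ hnd.consecutivePairs, ← List.sum_toFinset _ hnd.consecutivePairs]
  refine sum_sq_le_sum_mul_sum_of_sq_le_mul _ (fun e he => (one_div_pos.mpr (hpos e he)).le)
    (fun e he => mul_nonneg (hpos e he).le (sq_nonneg _)) fun e he => ?_
  rw [← mul_assoc, one_div_mul_cancel (hpos e he).ne', one_mul]

variable [Fintype V]

def dirichletEnergy (w : V → V → ℝ) (F : V → ℝ) : ℝ :=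
  ∑ e : V × V, w e.1 e.2 * (F e.1 - F e.2) ^ 2

theorem dirichletEnergy_eq (w : V → V → ℝ) (hsymm : ∀ x y, w x y = w y x) (wd : V → ℝ)
    (hwd : ∀ x, wd x = ∑ y, w x y) (F : V → ℝ) :
    dirichletEnergy w F = 2 * (∑ x, wd x * F x ^ 2 - ∑ x, F x * ∑ y, w x y * F y) := by
  have hrow : ∑ x, ∑ y, w x y * F x ^ 2 = ∑ x, wd x * F x ^ 2 := by
    simp_rw [hwd, sum_mul]
  have hcol : ∑ x, ∑ y, w x y * F y ^ 2 = ∑ x, wd x * F x ^ 2 := by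
    rw [sum_comm]
    simp_rw [hwd, sum_mul, hsymm]
  have hcross : ∑ x, ∑ y, w x y * (F x * F y) = ∑ x, F x * ∑ y, w x y * F y := by
    simp_rw [mul_sum]
    exact sum_congr rfl fun x _ => sum_congr rfl fun y _ => by ring
  calc dirichletEnergy w F
      = ∑ x, ∑ y, (w x y * F x ^ 2 + w x y * F y ^ 2 - 2 * (w x y * (F x * F y))) := by
        rw [dirichletEnergy, Fintype.sum_prod_type]
        exact sum_congr rfl fun x _ => sum_congr rfl fun y _ => by ring
    _ = 2 * (∑ x, wd x * F x ^ 2 - ∑ x, F x * ∑ y, w x y * F y) := by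
        simp only [sum_add_distrib, sum_sub_distrib, ← mul_sum, hrow, hcol, hcross]
        ring

theorem dirichletEnergy_eq_of_eigen (w : V → V → ℝ) (hsymm : ∀ x y, w x y = w y x)
    (wd : V → ℝ) (hwd : ∀ x, wd x = ∑ y, w x y) (D : Finset V) {lam : ℝ} {F : V → ℝ}
    (hF : ∀ x ∈ D, F x = 0) (heig : ∀ x ∉ D, ∑ y, w x y * F y = lam * (wd x * F x)) :
    dirichletEnergy w F = 2 * (1 - lam) * ∑ x, wd x * F x ^ 2 := by
  have hcross : ∑ x, F x * ∑ y, w x y * F y = lam * ∑ x, wd x * F x ^ 2 := by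
    rw [mul_sum]
    refine sum_congr rfl fun x _ => ?_
    by_cases hx : x ∈ D
    · simp [hF x hx]
    · rw [heig x hx]
      ring
  rw [dirichletEnergy_eq w hsymm wd hwd, hcross]
  ring

variable [DecidableEq V]

theorem exists_dirichlet_eigenfunction (w : V → V → ℝ) (wd : V → ℝ) (hwd : ∀ x, wd x ≠ 0)
    (D : Finset V) (A : Matrix {x : V // x ∉ D} {x : V // x ∉ D} ℝ)
    (hA : ∀ i j, A i j = w i.1 j.1 / wd i.1) {lam : ℝ} (hlam : lam ∈ spectrum ℝ A) :
    ∃ F : V → ℝ, (∀ x ∈ D, F x = 0) ∧ (∃ x, F x ≠ 0) ∧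
      ∀ x ∉ D, ∑ y, w x y * F y = lam * (wd x * F x) := by
  obtain ⟨f, hf0, hf⟩ := Matrix.exists_mulVec_eq_smul_of_mem_spectrum hlam
  refine ⟨fun x => if h : x ∈ D then 0 else f ⟨x, h⟩, fun x hx => dif_pos hx, ?_, fun x hx => ?_⟩
  · obtain ⟨i, hi⟩ := Function.ne_iff.mp hf0
    exact ⟨i, by simpa [dif_neg i.2] using hi⟩
  · have hrow := congrFun hf ⟨x, hx⟩
    simp only [mulVec, dotProduct, hA, Pi.smul_apply, smul_eq_mul, div_mul_eq_mul_div,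
      ← sum_div, div_eq_iff (hwd x)] at hrow
    beta_reduce
    rw [dif_neg hx]
    calc _ = ∑ j : {x : V // x ∉ D}, w x j * f j :=
          sum_congr_set {x | x ∉ D} _ _ (fun y hy => by simp [dif_neg hy])
            fun y hy => by simp [dif_pos (not_not.mp hy)]
      _ = _ := by rw [hrow]; ring

def congestion (w : V → V → ℝ) (c : V → ℝ) (D : Finset V) (p : V → List V) (e : V × V) : ℝ :=
  ∑ i ∈ univ \ D, if e ∈ (p i).consecutivePairs then c i * pathResistance w (p i) else 0

theorem mul_sq_le_sum_ite_mem_mul_energy (w : V → V → ℝ) {c : ℝ} (hc : 0 ≤ c) (F : V → ℝ)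
    {l : List V} {i j : V} (hi : l.head? = some i) (hj : l.getLast? = some j)
    (hl : l.IsChain fun x y => 0 < w x y) (hnd : l.Nodup) (hFj : F j = 0) :
    c * F i ^ 2 ≤ ∑ e : V × V, (if e ∈ l.consecutivePairs then c * pathResistance w l else 0) *
      (w e.1 e.2 * (F e.1 - F e.2) ^ 2) := by
  have h := sq_sub_le_pathResistance_mul_sum w F hi hj hl hnd
  rw [hFj, sub_zero] at h
  calc c * F i ^ 2
      ≤ c * (pathResistance w l *
          ∑ e ∈ l.consecutivePairs.toFinset, w e.1 e.2 * (F e.1 - F e.2) ^ 2) :=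
        mul_le_mul_of_nonneg_left h hc
    _ = _ := by
        simp_rw [ite_mul, zero_mul, ← List.mem_toFinset (l := l.consecutivePairs)]
        rw [sum_ite_mem, univ_inter, mul_sum, mul_sum]
        simp_rw [mul_assoc]

theorem sum_mul_sq_le_mul_dirichletEnergy (w : V → V → ℝ) (hw : ∀ x y, 0 ≤ w x y)
    (c : V → ℝ) (hc : ∀ i, 0 ≤ c i) (D : Finset V) (p : V → List V)
    (hp : ∀ i ∉ D, (p i).head? = some i ∧ (p i).IsChain (fun x y => 0 < w x y) ∧
      (∃ j ∈ D, (p i).getLast? = some j) ∧ (p i).Nodup)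
    {ξ : ℝ} (hξ : ∀ x y, 0 < w x y → congestion w c D p (x, y) ≤ ξ)
    (F : V → ℝ) (hF : ∀ x ∈ D, F x = 0) :
    ∑ i, c i * F i ^ 2 ≤ ξ * dirichletEnergy w F := by
  calc ∑ i, c i * F i ^ 2
      = ∑ i ∈ univ \ D, c i * F i ^ 2 := by
        refine (sum_subset (subset_univ _) fun i _ hi => ?_).symm
        rw [hF i (by simpa using hi), sq, mul_zero, mul_zero]
    _ ≤ ∑ i ∈ univ \ D, ∑ e : V × V,
          (if e ∈ (p i).consecutivePairs then c i * pathResistance w (p i) else 0) *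
            (w e.1 e.2 * (F e.1 - F e.2) ^ 2) := by
        refine sum_le_sum fun i hi => ?_
        obtain ⟨hhead, hchain, ⟨j, hjD, hlast⟩, hnd⟩ := hp i (mem_sdiff.mp hi).2
        exact mul_sq_le_sum_ite_mem_mul_energy w (hc i) F hhead hlast hchain hnd (hF j hjD)
    _ = ∑ e : V × V, congestion w c D p e * (w e.1 e.2 * (F e.1 - F e.2) ^ 2) := by
        rw [sum_comm]
        simp_rw [congestion, sum_mul]
    _ ≤ ∑ e : V × V, ξ * (w e.1 e.2 * (F e.1 - F e.2) ^ 2) := by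
        refine sum_le_sum fun ⟨x, y⟩ _ => ?_
        rcases (hw x y).eq_or_lt with hzero | hpos
        · simp [← hzero]
        · exact mul_le_mul_of_nonneg_right (hξ x y hpos) (mul_nonneg hpos.le (sq_nonneg _))
    _ = ξ * dirichletEnergy w F := (mul_sum _ _ _).symm

end

theorem stmt10_general {V : Type*} [Fintype V] [DecidableEq V]
    (w : V → V → ℝ) (hsymm : ∀ x y, w x y = w y x) (hnonneg : ∀ x y, 0 ≤ w x y)
    (wd : V → ℝ) (hwd : ∀ i, wd i = ∑ j, w i j) (hwdpos : ∀ i, 0 < wd i)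
    (D : Finset V)
    (Atil : Matrix {i : V // i ∉ D} {i : V // i ∉ D} ℝ)
    (hAtil : ∀ i j, Atil i j = w i.1 j.1 / wd i.1)
    (lam : ℝ) (hmem : lam ∈ spectrum ℝ Atil)
    (p : V → List V)
    (hpath : ∀ i ∉ D, (p i).head? = some i ∧ (p i).Chain' (fun x y => 0 < w x y) ∧
        (∃ j ∈ D, (p i).getLast? = some j) ∧ (p i).Nodup)
    (ξ : ℝ)
    (hξ : ∀ x y : V, 0 < w x y →
      (∑ i ∈ Finset.univ \ D,
        if (x, y) ∈ (p i).zip (p i).tail then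
          wd i * (((p i).zip (p i).tail).map (fun e => 1 / w e.1 e.2)).sum
        else 0) ≤ ξ) :
    1 / (1 - lam) ≤ 2 * ξ := by
  obtain ⟨F, hFD, ⟨x₀, hx₀⟩, heig⟩ :=
    exists_dirichlet_eigenfunction w wd (fun x => (hwdpos x).ne') D Atil hAtil hmem
  set S := ∑ x, wd x * F x ^ 2
  set T := dirichletEnergy w F
  have hS : 0 < S := sum_pos' (fun x _ => mul_nonneg (hwdpos x).le (sq_nonneg _))
    ⟨x₀, mem_univ _, mul_pos (hwdpos x₀) (sq_pos_of_ne_zero hx₀)⟩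
  have hT : T = 2 * (1 - lam) * S := dirichletEnergy_eq_of_eigen w hsymm wd hwd D hFD heig
  have hT₀ : 0 ≤ T := sum_nonneg fun e _ => mul_nonneg (hnonneg _ _) (sq_nonneg _)
  have hST : S ≤ ξ * T :=
    sum_mul_sq_le_mul_dirichletEnergy w hnonneg wd (fun i => (hwdpos i).le) D p hpath hξ F hFD
  have hgap₀ : 0 ≤ 2 * (1 - lam) := (mul_nonneg_iff_of_pos_right hS).mp (hT ▸ hT₀)
  have hξgap : 1 ≤ 2 * ξ * (1 - lam) :=
    le_of_mul_le_mul_right (by rw [hT] at hST; linarith) hS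
  have hgap : 0 < 1 - lam :=
    lt_of_le_of_ne (by linarith) fun h => by rw [← h, mul_zero] at hξgap; linarith
  rw [div_le_iff₀ hgap]
  linarith

/-- Diaconis–Stroock-type path bound: given, for each `i ∉ D`, a
non-self-intersecting path `p i` of edges of the weighted graph from `i` to the boundary
set `D`, and `ξ` dominating the weighted congestion
`ξ(x,y) = ∑_{i : (x,y) ∈ γ_i} w_i |γ_i|_w` of every oriented edge `(x,y)`,
one has `1/(1 − λ) ≤ 2ξ`. -/
theorem stmt10 {V : Type*} [Fintype V] [DecidableEq V]
    (w : V → V → ℝ) (hsymm : ∀ x y, w x y = w y x) (hnonneg : ∀ x y, 0 ≤ w x y)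
    (hirrefl : ∀ x, w x x = 0)
    (hconn : (SimpleGraph.fromRel (fun x y => 0 < w x y)).Connected)
    (wd : V → ℝ) (hwd : ∀ i, wd i = ∑ j, w i j) (hwdpos : ∀ i, 0 < wd i)
    (D : Finset V) (hD : D.Nonempty) (hDproper : D ≠ Finset.univ)
    (Atil : Matrix {i : V // i ∉ D} {i : V // i ∉ D} ℝ)
    (hAtil : ∀ i j, Atil i j = w i.1 j.1 / wd i.1)
    (lam : ℝ) (hmem : lam ∈ spectrum ℝ Atil) (hub : ∀ μ ∈ spectrum ℝ Atil, μ ≤ lam)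
    (p : V → List V)
    (hpath : ∀ i ∉ D, (p i).head? = some i ∧ (p i).Chain' (fun x y => 0 < w x y) ∧
        (∃ j ∈ D, (p i).getLast? = some j) ∧ (p i).Nodup)
    (ξ : ℝ)
    (hξ : ∀ x y : V, 0 < w x y →
      (∑ i ∈ Finset.univ \ D,
        if (x, y) ∈ (p i).zip (p i).tail then
          wd i * (((p i).zip (p i).tail).map (fun e => 1 / w e.1 e.2)).sum
        else 0) ≤ ξ) :
    1 / (1 - lam) ≤ 2 * ξ :=
  stmt10_general w hsymm hnonneg wd hwd hwdpos D Atil hAtil lam hmem p hpath ξ hξ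
end

section
/- Let Ĝ be a finite connected weighted graph on vertex set V̂ with symmetric positive edge weights، D ⊊ V̂ a nonempty boundary set, Ã the substochastic matrix on V̂ ∖ D with Ã_{ij} = w_{ij}/w_i, and λ its largest eigenvalue. Suppose for each vertex i ∈ V̂ ∖ D a non-self-intersecting path γ_i of oriented edges of Ĝ from i to some vertex of D is given, and let |γ_i| denote the number of edges of γ_i. For each oriented edge (x,y) of Ĝ define η(x,y) = (1/w_{xy}) Σ_{i : (x,y) ∈ γ_i} w_i |γ_i|, and let η = max_{(x,y)} η(x,y). Then 1/(1 − λ) ≤ 2η; equivalently 1 − λ ≥ 1/(2η). -/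
open Matrix Finset

private lemma stmt11_tele {V : Type*} (F : V → ℝ) :
    ∀ (l : List V) (a b : V), (a :: l).getLast? = some b →
    (((a :: l).zip l).map (fun e => F e.1 - F e.2)).sum = F a - F b := by
  intro l
  induction l with
  | nil =>
    intro a b h
    simp only [List.getLast?_singleton, Option.some.injEq] at h
    simp [h]
  | cons c t ih =>
    intro a b h
    rw [List.getLast?_cons_cons] at h
    have := ih c b h
    simp only [List.zip_cons_cons, List.map_cons, List.sum_cons, this]
    ring

private lemma stmt11_zipnodup {V : Type*} :
    ∀ l : List V, l.Nodup → (l.zip l.tail).Nodup := by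
  intro l
  induction l with
  | nil => simp
  | cons a t ih =>
    intro h
    cases t with
    | nil => simp
    | cons b t' =>
      simp only [List.tail_cons, List.zip_cons_cons]
      refine List.Nodup.cons ?_ (ih h.of_cons)
      intro hmem
      exact (List.nodup_cons.1 h).1 ((List.of_mem_zip hmem).1)

private lemma stmt11_zipchain {V : Type*} (R : V → V → Prop) :
    ∀ l : List V, l.Chain' R → ∀ e ∈ l.zip l.tail, R e.1 e.2 := by
  intro l
  induction l with
  | nil => simp
  | cons a t ih =>
    intro h e he
    cases t with
    | nil => simp at he
    | cons b t' =>
      simp only [List.tail_cons, List.zip_cons_cons, List.mem_cons] at he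
      rcases he with rfl | he
      · exact (List.isChain_cons_cons.1 h).1
      · exact ih (List.isChain_cons_cons.1 h).2 e he

/-- Sinclair-type path bound: given, for each `i ∉ D`, a
non-self-intersecting path `p i` of edges of the weighted graph from `i` to the boundary
set `D`, and `η` dominating the congestion
`η(x,y) = (1/w_{xy}) ∑_{i : (x,y) ∈ γ_i} w_i |γ_i|` of every oriented edge `(x,y)`,
one has `1/(1 − λ) ≤ 2η`. -/
theorem stmt11 {V : Type*} [Fintype V] [DecidableEq V]
    (w : V → V → ℝ) (hsymm : ∀ x y, w x y = w y x) (hnonneg : ∀ x y, 0 ≤ w x y)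
    (hirrefl : ∀ x, w x x = 0)
    (hconn : (SimpleGraph.fromRel (fun x y => 0 < w x y)).Connected)
    (wd : V → ℝ) (hwd : ∀ i, wd i = ∑ j, w i j) (hwdpos : ∀ i, 0 < wd i)
    (D : Finset V) (hD : D.Nonempty) (hDproper : D ≠ Finset.univ)
    (Atil : Matrix {i : V // i ∉ D} {i : V // i ∉ D} ℝ)
    (hAtil : ∀ i j, Atil i j = w i.1 j.1 / wd i.1)
    (lam : ℝ) (hmem : lam ∈ spectrum ℝ Atil) (hub : ∀ μ ∈ spectrum ℝ Atil, μ ≤ lam)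
    (p : V → List V)
    (hpath : ∀ i ∉ D, (p i).head? = some i ∧ (p i).Chain' (fun x y => 0 < w x y) ∧
        (∃ j ∈ D, (p i).getLast? = some j) ∧ (p i).Nodup)
    (η : ℝ)
    (hη : ∀ x y : V, 0 < w x y →
      (1 / w x y) * (∑ i ∈ Finset.univ \ D,
        if (x, y) ∈ (p i).zip (p i).tail then
          wd i * (((p i).zip (p i).tail).length : ℝ)
        else 0) ≤ η) :
    1 / (1 - lam) ≤ 2 * η := by
  classical
  -- η is nonnegative
  have hηnn : 0 ≤ η := by
    obtain ⟨i0, hi0⟩ : ∃ i0, i0 ∉ D := by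
      by_contra hcon
      push_neg at hcon
      exact hDproper (Finset.eq_univ_iff_forall.2 hcon)
    obtain ⟨hh, hc, ⟨j, hjD, hlast⟩, hnd⟩ := hpath i0 hi0
    obtain ⟨a, b, t, hab, hl⟩ : ∃ a b t, 0 < w a b ∧ p i0 = a :: b :: t := by
      match hl : p i0 with
      | [] => rw [hl] at hh; simp at hh
      | [a] =>
        rw [hl] at hh hlast
        simp only [List.head?_cons, Option.some.injEq] at hh
        simp only [List.getLast?_singleton, Option.some.injEq] at hlast
        exact absurd (by rw [← hh, hlast]; exact hjD) hi0
      | a :: b :: t =>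
        rw [hl] at hc
        exact ⟨a, b, t, (List.isChain_cons_cons.1 hc).1, rfl⟩
    have h1 := hη a b hab
    have h2 : (0:ℝ) ≤ (1 / w a b) * (∑ i ∈ Finset.univ \ D,
        if (a, b) ∈ (p i).zip (p i).tail then
          wd i * (((p i).zip (p i).tail).length : ℝ) else 0) := by
      apply mul_nonneg (by positivity)
      apply Finset.sum_nonneg
      intro i _
      split
      · exact mul_nonneg (hwdpos i).le (by positivity)
      · exact le_refl 0
    linarith
  -- the subtype of non-boundary vertices
  have hSne : Nonempty {i : V // i ∉ D} := by
    by_contra hcon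
    rw [not_nonempty_iff] at hcon
    refine hDproper (Finset.eq_univ_iff_forall.2 fun i => ?_)
    by_contra hiD
    exact hcon.false ⟨i, hiD⟩
  -- extract an eigenvector
  have hmem' : lam ∈ spectrum ℝ (Matrix.toLinAlgEquiv' Atil) := by
    rwa [AlgEquiv.spectrum_eq]
  have heig : Module.End.HasEigenvalue (Matrix.toLinAlgEquiv' Atil) lam :=
    Module.End.hasEigenvalue_iff_mem_spectrum.2 hmem'
  obtain ⟨v, hv⟩ := heig.exists_hasEigenvector
  have hv1 : ∀ i : {i : V // i ∉ D}, ∑ j : {i : V // i ∉ D}, Atil i j * v j = lam * v i := by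
    intro i
    have := congrFun hv.apply_eq_smul i
    rw [Matrix.toLinAlgEquiv'_apply] at this
    simpa [Matrix.mulVec, dotProduct] using this
  have hvne : ∃ j : {i : V // i ∉ D}, v j ≠ 0 := Function.ne_iff.1 hv.2
  -- extend the eigenvector by zero on D
  set F : V → ℝ := fun x => if h : x ∈ D then 0 else v ⟨x, h⟩ with hF
  have hFD : ∀ x ∈ D, F x = 0 := fun x hx => dif_pos hx
  have hFS : ∀ x (h : x ∉ D), F x = v ⟨x, h⟩ := fun x h => dif_neg h
  -- eigen relation on V
  have key : ∀ i ∉ D, ∑ y : V, w i y * F y = lam * (wd i * F i) := by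
    intro i hi
    have h2 := hv1 ⟨i, hi⟩
    simp only [hAtil] at h2
    have h3 : ∑ j : {i : V // i ∉ D}, w i j.1 / wd i * v j
        = (∑ j : {i : V // i ∉ D}, w i j.1 * v j) / wd i := by
      rw [Finset.sum_div]
      exact Finset.sum_congr rfl fun j _ => by ring
    rw [h3] at h2
    have hwne : wd i ≠ 0 := (hwdpos i).ne'
    have h4 : ∑ j : {i : V // i ∉ D}, w i j.1 * v j = lam * (wd i * v ⟨i, hi⟩) := by
      field_simp at h2
      linarith [h2]
    have h5 : ∑ y : V, w i y * F y = ∑ y ∈ Dᶜ, w i y * F y := by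
      refine (Finset.sum_subset (Finset.subset_univ Dᶜ) fun y _ hy => ?_).symm
      rw [Finset.mem_compl, not_not] at hy
      rw [hFD y hy, mul_zero]
    have h6 : ∑ y ∈ Dᶜ, w i y * F y = ∑ j : {i : V // i ∉ D}, w i j.1 * v j := by
      rw [Finset.sum_subtype Dᶜ (fun y => Finset.mem_compl) (fun y => w i y * F y)]
      exact Finset.sum_congr rfl fun j _ => by rw [hFS j.1 j.2]
    rw [h5, h6, h4, hFS i hi]
  -- the weighted norm
  set N : ℝ := ∑ x : V, wd x * F x ^ 2 with hNdef
  have hN0 : 0 < N := by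
    obtain ⟨j, hj⟩ := hvne
    refine Finset.sum_pos' (fun x _ => mul_nonneg (hwdpos x).le (sq_nonneg _)) ⟨j.1, Finset.mem_univ _, ?_⟩
    have : F j.1 = v j := by rw [hFS j.1 j.2]
    rw [this]
    exact mul_pos (hwdpos j.1) (by positivity)
  -- the Dirichlet form identity
  set E2 : ℝ := ∑ x : V, ∑ y : V, w x y * (F x - F y) ^ 2 with hE2def
  have hA : ∑ x : V, ∑ y : V, w x y * F x ^ 2 = N := by
    refine Finset.sum_congr rfl fun x _ => ?_
    rw [← Finset.sum_mul, ← hwd]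
  have hC : ∑ x : V, ∑ y : V, w x y * F y ^ 2 = N := by
    rw [Finset.sum_comm]
    refine Finset.sum_congr rfl fun y _ => ?_
    have : ∀ x, w x y * F y ^ 2 = w y x * F y ^ 2 := fun x => by rw [hsymm]
    rw [Finset.sum_congr rfl fun x _ => this x, ← Finset.sum_mul, ← hwd]
  have hB : ∑ x : V, ∑ y : V, w x y * (F x * F y) = lam * N := by
    have hterm : ∀ x : V, ∑ y : V, w x y * (F x * F y) = lam * (wd x * F x ^ 2) := by
      intro x
      by_cases hx : x ∈ D
      · simp [hFD x hx]
      · calc ∑ y : V, w x y * (F x * F y) = F x * ∑ y : V, w x y * F y := by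
              rw [Finset.mul_sum]
              exact Finset.sum_congr rfl fun y _ => by ring
          _ = F x * (lam * (wd x * F x)) := by rw [key x hx]
          _ = lam * (wd x * F x ^ 2) := by ring
    rw [Finset.sum_congr rfl fun x _ => hterm x, ← Finset.mul_sum]
  have hE2 : E2 = 2 * (1 - lam) * N := by
    have expand : ∀ x y : V, w x y * (F x - F y) ^ 2
        = w x y * F x ^ 2 - 2 * (w x y * (F x * F y)) + w x y * F y ^ 2 := fun x y => by ring
    calc E2 = ∑ x : V, ∑ y : V,
          (w x y * F x ^ 2 - 2 * (w x y * (F x * F y)) + w x y * F y ^ 2) := by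
          exact Finset.sum_congr rfl fun x _ => Finset.sum_congr rfl fun y _ => expand x y
      _ = (∑ x : V, ∑ y : V, w x y * F x ^ 2)
            - 2 * (∑ x : V, ∑ y : V, w x y * (F x * F y))
            + ∑ x : V, ∑ y : V, w x y * F y ^ 2 := by
          simp [Finset.sum_add_distrib, Finset.sum_sub_distrib, Finset.mul_sum]
      _ = N - 2 * (lam * N) + N := by rw [hA, hB, hC]
      _ = 2 * (1 - lam) * N := by ring
  -- N restricted to the non-boundary vertices
  have hNN : N = ∑ i ∈ Finset.univ \ D, wd i * F i ^ 2 := by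
    refine (Finset.sum_subset Finset.sdiff_subset fun i _ hi => ?_).symm
    rw [Finset.mem_sdiff, not_and, not_not] at hi
    rw [hFD i (hi (Finset.mem_univ i))]
    ring
  -- per-vertex Cauchy-Schwarz along the path
  have hper : ∀ i ∈ Finset.univ \ D, wd i * F i ^ 2 ≤
      ∑ e ∈ (Finset.univ : Finset (V × V)),
        (if (e.1, e.2) ∈ (p i).zip (p i).tail then
          wd i * (((p i).zip (p i).tail).length : ℝ) * (F e.1 - F e.2) ^ 2 else 0) := by
    intro i hi
    have hi' : i ∉ D := (Finset.mem_sdiff.1 hi).2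
    obtain ⟨hh, hc, ⟨j, hjD, hlast⟩, hnd⟩ := hpath i hi'
    have hnodupE : ((p i).zip (p i).tail).Nodup := stmt11_zipnodup (p i) hnd
    -- telescoping: F i equals the sum of differences along the path
    have htele : F i = ∑ e ∈ ((p i).zip (p i).tail).toFinset, (F e.1 - F e.2) := by
      rw [List.sum_toFinset _ hnodupE]
      cases hl : p i with
      | nil => rw [hl] at hh; simp at hh
      | cons a l' =>
        rw [hl] at hh hlast
        simp only [List.head?_cons, Option.some.injEq] at hh
        rw [List.tail_cons, stmt11_tele F l' a j hlast, hh, hFD j hjD, sub_zero]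
    have hcard : (((p i).zip (p i).tail).toFinset.card : ℝ)
        = (((p i).zip (p i).tail).length : ℝ) := by
      rw [List.toFinset_card_of_nodup hnodupE]
    have hcs : F i ^ 2 ≤ (((p i).zip (p i).tail).length : ℝ)
        * ∑ e ∈ ((p i).zip (p i).tail).toFinset, (F e.1 - F e.2) ^ 2 := by
      rw [htele, ← hcard]
      exact sq_sum_le_card_mul_sum_sq
    have hrhs : ∑ e ∈ (Finset.univ : Finset (V × V)),
        (if (e.1, e.2) ∈ (p i).zip (p i).tail then
          wd i * (((p i).zip (p i).tail).length : ℝ) * (F e.1 - F e.2) ^ 2 else 0)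
        = wd i * ((((p i).zip (p i).tail).length : ℝ)
            * ∑ e ∈ ((p i).zip (p i).tail).toFinset, (F e.1 - F e.2) ^ 2) := by
      calc ∑ e ∈ (Finset.univ : Finset (V × V)),
          (if (e.1, e.2) ∈ (p i).zip (p i).tail then
            wd i * (((p i).zip (p i).tail).length : ℝ) * (F e.1 - F e.2) ^ 2 else 0)
          = ∑ e ∈ (Finset.univ : Finset (V × V)),
            (if e ∈ ((p i).zip (p i).tail).toFinset then
              wd i * (((p i).zip (p i).tail).length : ℝ) * (F e.1 - F e.2) ^ 2 else 0) := by
            refine Finset.sum_congr rfl fun e _ => ?_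
            simp [List.mem_toFinset]
        _ = ∑ e ∈ Finset.univ ∩ ((p i).zip (p i).tail).toFinset,
            wd i * (((p i).zip (p i).tail).length : ℝ) * (F e.1 - F e.2) ^ 2 :=
            Finset.sum_ite_mem _ _ _
        _ = ∑ e ∈ ((p i).zip (p i).tail).toFinset,
            wd i * (((p i).zip (p i).tail).length : ℝ) * (F e.1 - F e.2) ^ 2 := by
            rw [Finset.univ_inter]
        _ = wd i * ((((p i).zip (p i).tail).length : ℝ)
            * ∑ e ∈ ((p i).zip (p i).tail).toFinset, (F e.1 - F e.2) ^ 2) := by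
            rw [Finset.mul_sum, Finset.mul_sum]
            exact Finset.sum_congr rfl fun e _ => by ring
    rw [hrhs]
    exact mul_le_mul_of_nonneg_left hcs (hwdpos i).le
  -- edgewise congestion bound
  have hedge : ∀ x y : V,
      ∑ i ∈ Finset.univ \ D, (if (x, y) ∈ (p i).zip (p i).tail then
        wd i * (((p i).zip (p i).tail).length : ℝ) * (F x - F y) ^ 2 else 0)
      ≤ η * (w x y * (F x - F y) ^ 2) := by
    intro x y
    have step : ∑ i ∈ Finset.univ \ D, (if (x, y) ∈ (p i).zip (p i).tail then
        wd i * (((p i).zip (p i).tail).length : ℝ) * (F x - F y) ^ 2 else 0)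
        = (∑ i ∈ Finset.univ \ D, if (x, y) ∈ (p i).zip (p i).tail then
            wd i * (((p i).zip (p i).tail).length : ℝ) else 0) * (F x - F y) ^ 2 := by
      rw [Finset.sum_mul]
      refine Finset.sum_congr rfl fun i _ => ?_
      split <;> simp
    rw [step]
    by_cases hxy : 0 < w x y
    · have h9 := hη x y hxy
      rw [one_div, inv_mul_le_iff₀ hxy] at h9
      calc (∑ i ∈ Finset.univ \ D, if (x, y) ∈ (p i).zip (p i).tail then
            wd i * (((p i).zip (p i).tail).length : ℝ) else 0) * (F x - F y) ^ 2
          ≤ (w x y * η) * (F x - F y) ^ 2 :=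
            mul_le_mul_of_nonneg_right h9 (sq_nonneg _)
        _ = η * (w x y * (F x - F y) ^ 2) := by ring
    · have hw0 : w x y = 0 := le_antisymm (not_lt.1 hxy) (hnonneg x y)
      have hz : (∑ i ∈ Finset.univ \ D, if (x, y) ∈ (p i).zip (p i).tail then
          wd i * (((p i).zip (p i).tail).length : ℝ) else 0) = 0 := by
        refine Finset.sum_eq_zero fun i hi => ?_
        rw [if_neg]
        intro hmem
        have hi' : i ∉ D := (Finset.mem_sdiff.1 hi).2
        obtain ⟨_, hc, _, _⟩ := hpath i hi'
        exact hxy (stmt11_zipchain _ (p i) hc _ hmem)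
      rw [hz, hw0]
      simp
  -- assemble: N ≤ η * E2
  have hfinal : N ≤ η * E2 := by
    calc N = ∑ i ∈ Finset.univ \ D, wd i * F i ^ 2 := hNN
      _ ≤ ∑ i ∈ Finset.univ \ D, ∑ e ∈ (Finset.univ : Finset (V × V)),
            (if (e.1, e.2) ∈ (p i).zip (p i).tail then
              wd i * (((p i).zip (p i).tail).length : ℝ) * (F e.1 - F e.2) ^ 2 else 0) :=
          Finset.sum_le_sum hper
      _ = ∑ e ∈ (Finset.univ : Finset (V × V)), ∑ i ∈ Finset.univ \ D,
            (if (e.1, e.2) ∈ (p i).zip (p i).tail then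
              wd i * (((p i).zip (p i).tail).length : ℝ) * (F e.1 - F e.2) ^ 2 else 0) :=
          Finset.sum_comm
      _ ≤ ∑ e ∈ (Finset.univ : Finset (V × V)), η * (w e.1 e.2 * (F e.1 - F e.2) ^ 2) :=
          Finset.sum_le_sum fun e _ => hedge e.1 e.2
      _ = η * ∑ e ∈ (Finset.univ : Finset (V × V)), w e.1 e.2 * (F e.1 - F e.2) ^ 2 := by
          rw [Finset.mul_sum]
      _ = η * E2 := by rw [Fintype.sum_prod_type, hE2def]
  -- conclude
  have h1 : 1 ≤ 2 * η * (1 - lam) := by nlinarith [hN0, hfinal, hE2]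
  have h2lam : 0 < 1 - lam := by nlinarith [hηnn, h1]
  rw [div_le_iff₀ h2lam]
  linarith [h1]
end

section
/- Let Ĝ be a finite connected weighted graph on vertex set V̂ with symmetric positive edge weights, D ⊊ V̂ a nonempty boundary set, Ã the substochastic matrix on V̂ ∖ D with Ã_{ij} = w_{ij}/w_i, and λ its largest eigenvalue. Then for every nonempty subset B ⊆ V̂ ∖ D, 1 − λ ≤ ψ(B; Ĝ) := (Σ_{i∈B, j∉B} w_{ij}) / (Σ_{i∈B} w_i). In particular 1 − λ ≤ min_{B ⊆ V̂∖D, B ≠ ∅} ψ(B; Ĝ). -/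
/-!
Conjugating `Ã` by `diagonal (√w_i)` gives a symmetric matrix with the same spectrum, so `λ`
bounds its Rayleigh quotient. Testing it on `√w_i · 𝟙_B` gives `∑_{i,j ∈ B} w_ij ≤ λ ∑_{i ∈ B} w_i`,
while the cut is `∑_{i ∈ B, j ∉ B} w_ij = ∑_{i ∈ B} w_i - ∑_{i,j ∈ B} w_ij`.
-/

open Matrix Finset

namespace Matrix

variable {ι : Type*} [Fintype ι] [DecidableEq ι]

theorem spectrum_diagonal_mul_mul_diagonal_inv {p : ι → ℝ} (hp : ∀ i, p i ≠ 0)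
    (A : Matrix ι ι ℝ) : spectrum ℝ (diagonal p * A * diagonal p⁻¹) = spectrum ℝ A :=
  let u : (Matrix ι ι ℝ)ˣ := ⟨diagonal p, diagonal p⁻¹, by simp [hp], by simp [hp]⟩
  spectrum.units_conjugate (u := u)

theorem IsHermitian.dotProduct_mulVec_le_of_spectrum_le {S : Matrix ι ι ℝ} (hS : S.IsHermitian)
    {lam : ℝ} (hlam : ∀ μ ∈ spectrum ℝ S, μ ≤ lam) (v : ι → ℝ) :
    v ⬝ᵥ S *ᵥ v ≤ lam * (v ⬝ᵥ v) := by
  have hshift : (algebraMap ℝ (Matrix ι ι ℝ) lam - S).PosSemidef := by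
    refine posSemidef_iff_isHermitian_and_spectrum_nonneg.mpr ⟨?_, ?_⟩
    · rw [algebraMap_eq_diagonal]
      exact (isHermitian_diagonal _).sub hS
    · rw [← spectrum.singleton_sub_eq]
      rintro _ ⟨_, rfl, μ, hμ, rfl⟩
      exact sub_nonneg.mpr (hlam μ hμ)
  have hnonneg := hshift.dotProduct_mulVec_nonneg v
  rw [Algebra.algebraMap_eq_smul_one, star_trivial, sub_mulVec, smul_mulVec, one_mulVec,
    dotProduct_sub, dotProduct_smul, smul_eq_mul] at hnonneg
  linarith

theorem sum_mul_mul_le_of_spectrum_le_of_reversible {A : Matrix ι ι ℝ} {w : ι → ι → ℝ}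
    (hw : ∀ i j, w i j = w j i) {d : ι → ℝ} (hd : ∀ i, 0 < d i)
    (hA : ∀ i j, A i j = w i j / d i) {lam : ℝ} (hlam : ∀ μ ∈ spectrum ℝ A, μ ≤ lam)
    (f : ι → ℝ) : ∑ i, ∑ j, f i * w i j * f j ≤ lam * ∑ i, d i * f i ^ 2 := by
  set p : ι → ℝ := fun i => √(d i)
  have hp : ∀ i, p i ≠ 0 := fun i => (Real.sqrt_pos.mpr (hd i)).ne'
  have hpp : ∀ i, p i * p i = d i := fun i => Real.mul_self_sqrt (hd i).le
  set S := diagonal p * A * diagonal p⁻¹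
  have hentry : ∀ i j, S i j = w i j / (p i * p j) := fun i j => by
    simp only [S, mul_diagonal, diagonal_mul, hA, ← hpp i, Pi.inv_apply]
    field_simp [hp i, hp j]
  have hS : S.IsHermitian := by
    ext i j
    simp only [conjTranspose_apply, star_trivial, hentry, hw j i, mul_comm (p j)]
  have hSv : S *ᵥ (p * f) = p * (A *ᵥ f) := by
    have hcancel : diagonal p⁻¹ *ᵥ (p * f) = f := by
      ext i
      simp [mulVec_diagonal, hp i]
    rw [← mulVec_mulVec, ← mulVec_mulVec, hcancel]
    ext i
    simp [mulVec_diagonal]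
  have hform : (p * f) ⬝ᵥ S *ᵥ (p * f) = ∑ i, ∑ j, f i * w i j * f j := by
    rw [hSv]
    simp only [dotProduct, mulVec, hA, Pi.mul_apply, Finset.mul_sum]
    refine Finset.sum_congr rfl fun i _ => Finset.sum_congr rfl fun j _ => ?_
    rw [← hpp i]
    field_simp [hp i]
  have hnorm : (p * f) ⬝ᵥ (p * f) = ∑ i, d i * f i ^ 2 := by
    simp only [dotProduct, Pi.mul_apply, ← hpp]
    exact Finset.sum_congr rfl fun i _ => by ring
  rw [← hform, ← hnorm]
  exact hS.dotProduct_mulVec_le_of_spectrum_le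
    (by rwa [spectrum_diagonal_mul_mul_diagonal_inv hp]) (p * f)

end Matrix

theorem Finset.sum_subtype_ite_mem {V M : Type*} [Fintype V] [DecidableEq V] [AddCommMonoid M]
    {D B : Finset V} (hB : B ⊆ univ \ D) (g : V → M) :
    ∑ i : {i : V // i ∉ D}, (if i.1 ∈ B then g i.1 else 0) = ∑ i ∈ B, g i := by
  rw [← Finset.sum_subtype (s := univ \ D) (by simp) (fun x => if x ∈ B then g x else 0),
    Finset.sum_ite_mem, Finset.inter_eq_right.mpr hB]

theorem stmt12_general {V : Type*} [Fintype V] [DecidableEq V]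
    (w : V → V → ℝ) (hsymm : ∀ x y, w x y = w y x)
    (wd : V → ℝ) (hwd : ∀ i, wd i = ∑ j, w i j) (hwdpos : ∀ i, 0 < wd i)
    (D : Finset V)
    (Atil : Matrix {i : V // i ∉ D} {i : V // i ∉ D} ℝ)
    (hAtil : ∀ i j, Atil i j = w i.1 j.1 / wd i.1)
    (lam : ℝ) (hub : ∀ μ ∈ spectrum ℝ Atil, μ ≤ lam) :
    ∀ B : Finset V, B.Nonempty → B ⊆ Finset.univ \ D →
      1 - lam ≤ (∑ i ∈ B, ∑ j ∈ Finset.univ \ B, w i j) / (∑ i ∈ B, wd i) := by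
  intro B hB hBD
  set f : {i : V // i ∉ D} → ℝ := fun i => if i.1 ∈ B then 1 else 0
  have hinner : ∑ i, ∑ j, f i * w i.1 j.1 * f j = ∑ i ∈ B, ∑ j ∈ B, w i j := by
    calc ∑ i, ∑ j, f i * w i.1 j.1 * f j
        = ∑ i : {i : V // i ∉ D}, if i.1 ∈ B then
            ∑ j : {i : V // i ∉ D}, (if j.1 ∈ B then w i.1 j.1 else 0) else 0 := by
          refine Finset.sum_congr rfl fun i _ => ?_
          by_cases hi : i.1 ∈ B <;> simp [f, hi, mul_ite]
      _ = ∑ i ∈ B, ∑ j ∈ B, w i j := by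
          simp only [Finset.sum_subtype_ite_mem hBD]
          exact Finset.sum_subtype_ite_mem hBD fun i => ∑ j ∈ B, w i j
  have hvol : ∑ i, wd i.1 * f i ^ 2 = ∑ i ∈ B, wd i := by
    simpa [f] using Finset.sum_subtype_ite_mem hBD wd
  have hcut : ∑ i ∈ B, ∑ j ∈ univ \ B, w i j = ∑ i ∈ B, wd i - ∑ i ∈ B, ∑ j ∈ B, w i j := by
    rw [← Finset.sum_sub_distrib]
    exact Finset.sum_congr rfl fun i _ => by rw [Finset.sum_sdiff_eq_sub B.subset_univ, hwd]
  have hquad := sum_mul_mul_le_of_spectrum_le_of_reversible (fun i j => hsymm i.1 j.1)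
    (fun i => hwdpos i.1) hAtil hub f
  rw [hinner, hvol] at hquad
  rw [le_div_iff₀ (Finset.sum_pos (fun i _ => hwdpos i) hB), hcut]
  linarith

/-- Conductance-type lower bound on the spectral gap: for every nonempty
`B ⊆ V̂ ∖ D`, `1 − λ ≤ ψ(B; Ĝ) = (∑_{i∈B, j∉B} w_{ij}) / (∑_{i∈B} w_i)`. -/
theorem stmt12 {V : Type*} [Fintype V] [DecidableEq V]
    (w : V → V → ℝ) (hsymm : ∀ x y, w x y = w y x) (hnonneg : ∀ x y, 0 ≤ w x y)
    (hirrefl : ∀ x, w x x = 0)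
    (hconn : (SimpleGraph.fromRel (fun x y => 0 < w x y)).Connected)
    (wd : V → ℝ) (hwd : ∀ i, wd i = ∑ j, w i j) (hwdpos : ∀ i, 0 < wd i)
    (D : Finset V) (hD : D.Nonempty) (hDproper : D ≠ Finset.univ)
    (Atil : Matrix {i : V // i ∉ D} {i : V // i ∉ D} ℝ)
    (hAtil : ∀ i j, Atil i j = w i.1 j.1 / wd i.1)
    (lam : ℝ) (hmem : lam ∈ spectrum ℝ Atil) (hub : ∀ μ ∈ spectrum ℝ Atil, μ ≤ lam) :
    ∀ B : Finset V, B.Nonempty → B ⊆ Finset.univ \ D →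
      1 - lam ≤ (∑ i ∈ B, ∑ j ∈ Finset.univ \ B, w i j) / (∑ i ∈ B, wd i) :=
  stmt12_general w hsymm wd hwd hwdpos D Atil hAtil lam hub
end

section
/- Consider the best-response opinion dynamics on a finite simple connected graph G with edge set E, in which all stubborn agents are partially stubborn (no fully stubborn agents; K_i < ∞ for all i) and at least one K_j > 0. Let λ_A be the largest eigenvalue of A. Then λ_A ≥ 2|E| / (2|E| + Σ_{j : K_j > 0} K_j); equivalently, the convergence time T = 1/(1 − λ_A) satisfies T ≥ 1 + 2|E| / Σ_{j : K_j > 0} K_j. -/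
/-!
`A = W⁻¹ Adj` with `W = diag(d_i + K_i)`, so `A` is similar to the symmetric matrix
`W^{-1/2} Adj W^{-1/2}`, whose Rayleigh quotients are therefore bounded by `λ_A`.
Rewritten in the original coordinates this reads `xᵀ Adj x ≤ λ_A ∑ wᵢ xᵢ²`, and the all-ones
vector gives `2|E| ≤ λ_A (2|E| + ∑ K_j)`.
-/

open Matrix Finset

section RayleighQuotient

variable {n : Type*} [Fintype n] [DecidableEq n]

open scoped MatrixOrder in
theorem Matrix.IsHermitian.dotProduct_mulVec_le_of_spectrum_le_s13 {S : Matrix n n ℝ}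
    (hS : S.IsHermitian) {c : ℝ} (hc : ∀ μ ∈ spectrum ℝ S, μ ≤ c) (x : n → ℝ) :
    x ⬝ᵥ S *ᵥ x ≤ c * (x ⬝ᵥ x) := by
  have hpsd : (algebraMap ℝ _ c - S).PosSemidef :=
    le_algebraMap_of_spectrum_le hc hS.isSelfAdjoint
  simpa [sub_mulVec, Algebra.algebraMap_eq_smul_one, smul_mulVec, dotProduct_smul] using
    hpsd.dotProduct_mulVec_nonneg x

theorem Matrix.IsSymm.dotProduct_mulVec_le_of_spectrum_diagonal_inv_mul_le {B : Matrix n n ℝ}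
    (hB : B.IsSymm) {w : n → ℝ} (hw : ∀ i, 0 < w i) {c : ℝ}
    (hc : ∀ μ ∈ spectrum ℝ (diagonal w⁻¹ * B), μ ≤ c) (x : n → ℝ) :
    x ⬝ᵥ B *ᵥ x ≤ c * ∑ i, w i * x i ^ 2 := by
  set s : n → ℝ := fun i => √(w i)
  have hs : ∀ i, s i ≠ 0 := fun i => (Real.sqrt_pos.2 (hw i)).ne'
  have hsw : ∀ i, s i * s i = w i := fun i => Real.mul_self_sqrt (hw i).le
  let u : (Matrix n n ℝ)ˣ :=
    ⟨diagonal s, diagonal s⁻¹, by simp [diagonal_mul_diagonal, hs],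
      by simp [diagonal_mul_diagonal, hs]⟩
  have hconj : (u : Matrix n n ℝ) * (diagonal w⁻¹ * B) * (↑u⁻¹ : Matrix n n ℝ) =
      diagonal s⁻¹ * B * diagonal s⁻¹ := by
    have hdiag : diagonal s * diagonal w⁻¹ = diagonal s⁻¹ := by
      rw [diagonal_mul_diagonal]
      congr 1; funext i
      simp [← hsw i, hs i]
    simp only [u, Units.inv_mk, ← Matrix.mul_assoc, hdiag]
  have hS : (diagonal s⁻¹ * B * diagonal s⁻¹).IsHermitian := by
    simp [IsHermitian, Matrix.mul_assoc, hB.eq]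
  have key := hS.dotProduct_mulVec_le_of_spectrum_le_s13 (c := c)
    (by rwa [← hconj, spectrum.units_conjugate]) (diagonal s *ᵥ x)
  have hquad : diagonal s *ᵥ x ⬝ᵥ (diagonal s⁻¹ * B * diagonal s⁻¹) *ᵥ diagonal s *ᵥ x =
      x ⬝ᵥ B *ᵥ x := by
    rw [mulVec_mulVec, Matrix.mul_assoc, u.inv_val, Matrix.mul_one, ← mulVec_mulVec]
    simp only [dotProduct, mulVec_diagonal, Pi.inv_apply]
    exact sum_congr rfl fun i _ => by field_simp [hs i]
  have hnorm : diagonal s *ᵥ x ⬝ᵥ diagonal s *ᵥ x = ∑ i, w i * x i ^ 2 := by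
    simp only [dotProduct, mulVec_diagonal, ← hsw]
    exact sum_congr rfl fun i _ => by ring
  rwa [hquad, hnorm] at key

end RayleighQuotient

theorem SimpleGraph.Connected.degree_add_pos {V : Type*} [Fintype V] {G : SimpleGraph V}
    [DecidableRel G.Adj] (hG : G.Connected) {K : V → ℝ} (hK : ∀ i, 0 ≤ K i) {j : V}
    (hj : 0 < K j) (i : V) : 0 < (G.degree i : ℝ) + K i := by
  rcases eq_or_ne i j with rfl | hij
  · positivity
  · have : 0 < G.degree i := (hG.preconnected i j).degree_pos_left hij
    have := hK i
    positivity

theorem stmt13_general {n : ℕ} (G : SimpleGraph (Fin n)) [DecidableRel G.Adj]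
    (hconn : G.Connected)
    (K : Fin n → ℝ) (hK : ∀ i, 0 ≤ K i) (hstub : ∃ j, 0 < K j)
    (A : Matrix (Fin n) (Fin n) ℝ)
    (hA : ∀ i j, A i j = if G.Adj i j then 1 / ((G.degree i : ℝ) + K i) else 0)
    (lamA : ℝ) (hub : ∀ μ ∈ spectrum ℝ A, |μ| ≤ lamA) :
    2 * (G.edgeFinset.card : ℝ) /
        (2 * (G.edgeFinset.card : ℝ) + ∑ j ∈ Finset.univ.filter (fun j => 0 < K j), K j)
      ≤ lamA := by
  obtain ⟨j, hj⟩ := hstub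
  set w : Fin n → ℝ := fun i => (G.degree i : ℝ) + K i
  have hA_eq : A = diagonal w⁻¹ * G.adjMatrix ℝ := by
    ext i k
    rw [hA, diagonal_mul, SimpleGraph.adjMatrix_apply]
    split_ifs <;> simp [w]
  have hRayleigh := G.isSymm_adjMatrix.dotProduct_mulVec_le_of_spectrum_diagonal_inv_mul_le
    (hconn.degree_add_pos hK hj) (c := lamA)
    (fun μ hμ => (le_abs_self μ).trans (hub μ (hA_eq ▸ hμ))) 1
  have hedges : (1 : Fin n → ℝ) ⬝ᵥ G.adjMatrix ℝ *ᵥ 1 = 2 * #G.edgeFinset := by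
    rw [dotProduct_comm, ← G.natCast_card_dart_eq_dotProduct]
    exact_mod_cast G.dart_card_eq_twice_card_edges
  have hdegrees : ∑ i, (G.degree i : ℝ) = 2 * #G.edgeFinset := by
    exact_mod_cast G.sum_degrees_eq_twice_card_edges
  simp only [hedges, Pi.one_apply, one_pow, mul_one, sum_add_distrib, hdegrees] at hRayleigh
  have hsumK : ∑ j ∈ univ.filter (fun j => 0 < K j), K j = ∑ j, K j :=
    sum_filter_of_ne fun i _ hi => (hK i).lt_of_ne' hi
  have hKpos : 0 < ∑ j, K j := sum_pos' (fun i _ => hK i) ⟨j, mem_univ j, hj⟩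
  rw [hsumK, div_le_iff₀ (by positivity)]
  exact hRayleigh

/-- With only partially stubborn agents (all `K_i` finite, at least one
positive), the largest eigenvalue `λ_A` of the best-response matrix `A` satisfies
`λ_A ≥ 2|E| / (2|E| + ∑_{j : K_j > 0} K_j)`. -/
theorem stmt13 {n : ℕ} (G : SimpleGraph (Fin n)) [DecidableRel G.Adj]
    (hconn : G.Connected)
    (K : Fin n → ℝ) (hK : ∀ i, 0 ≤ K i) (hstub : ∃ j, 0 < K j)
    (A : Matrix (Fin n) (Fin n) ℝ)
    (hA : ∀ i j, A i j = if G.Adj i j then 1 / ((G.degree i : ℝ) + K i) else 0)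
    (lamA : ℝ) (hmem : lamA ∈ spectrum ℝ A) (hub : ∀ μ ∈ spectrum ℝ A, |μ| ≤ lamA) :
    2 * (G.edgeFinset.card : ℝ) /
        (2 * (G.edgeFinset.card : ℝ) + ∑ j ∈ Finset.univ.filter (fun j => 0 < K j), K j)
      ≤ lamA :=
  stmt13_general G hconn K hK hstub A hA lamA hub
end

section
/- Consider the best-response opinion dynamics on the path graph with vertices 1,…,n (edges {i,i+1} for 1 ≤ i ≤ n−1), where agents 1 and n are partially stubborn with parameters K₁ > 0 and K_n > 0 and all other agents have K_i = 0. Then at equilibrium, for every 1 ≤ i ≤ n, x_i(∞) = (1 − (K₁^{−1} + i − 1)/(K₁^{−1} + K_n^{−1} + n − 1)) x₁(0) + ((K₁^{−1} + i − 1)/(K₁^{−1} + K_n^{−1} + n − 1)) x_n(0). -/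
open Matrix Finset

set_option maxHeartbeats 1000000 in
/-- On the path graph with vertices `1,…,n` (here indexed `0,…,n−1`),
with endpoints partially stubborn (`K₁, K_n > 0`) and all other agents non-stubborn, the
equilibrium opinion of agent `i` is the stated convex combination of the endpoint
opinions: `x_i(∞) = (1 − (K₁⁻¹+i−1)/(K₁⁻¹+K_n⁻¹+n−1)) x₁(0)
+ ((K₁⁻¹+i−1)/(K₁⁻¹+K_n⁻¹+n−1)) x_n(0)` (paper index `i` corresponds to `i.val + 1`). -/
theorem stmt15 {n : ℕ} (hn : 2 ≤ n)
    (K1 Kn : ℝ) (hK1 : 0 < K1) (hKn : 0 < Kn)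
    (K : Fin n → ℝ)
    (hKfirst : K ⟨0, by omega⟩ = K1) (hKlast : K ⟨n - 1, by omega⟩ = Kn)
    (hKmid : ∀ i : Fin n, i.val ≠ 0 → i.val ≠ n - 1 → K i = 0)
    (d : Fin n → ℝ) (hd : ∀ i : Fin n, d i = if i.val = 0 ∨ i.val = n - 1 then 1 else 2)
    (A B : Matrix (Fin n) (Fin n) ℝ)
    (hA : ∀ i j : Fin n,
      A i j = if i.val + 1 = j.val ∨ j.val + 1 = i.val then 1 / (d i + K i) else 0)
    (hB : ∀ i j : Fin n, B i j = if i = j then K i / (d i + K i) else 0)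
    (x0 : Fin n → ℝ) (xinf : Fin n → ℝ) (hxinf : xinf = ((1 - A)⁻¹ * B).mulVec x0) :
    ∀ i : Fin n, xinf i =
      (1 - (K1⁻¹ + (i.val : ℝ)) / (K1⁻¹ + Kn⁻¹ + (n : ℝ) - 1)) * x0 ⟨0, by omega⟩
      + ((K1⁻¹ + (i.val : ℝ)) / (K1⁻¹ + Kn⁻¹ + (n : ℝ) - 1)) * x0 ⟨n - 1, by omega⟩ := by
  have hn0 : 0 < n := by omega
  have hlt : n - 1 < n := by omega
  have hK1' : K1 ≠ 0 := ne_of_gt hK1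
  have hKn' : Kn ≠ 0 := ne_of_gt hKn
  have h1K1 : (1:ℝ) + K1 ≠ 0 := by positivity
  have h1Kn : (1:ℝ) + Kn ≠ 0 := by positivity
  have hn2 : (2:ℝ) ≤ (n:ℝ) := by exact_mod_cast hn
  set D : ℝ := K1⁻¹ + Kn⁻¹ + (n : ℝ) - 1 with hDdef
  have hDpos : 0 < D := by
    have h1 : 0 < K1⁻¹ := inv_pos.mpr hK1
    have h2 : 0 < Kn⁻¹ := inv_pos.mpr hKn
    rw [hDdef]; linarith
  have hDne : D ≠ 0 := ne_of_gt hDpos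
  set a : ℝ := x0 ⟨0, by omega⟩ with ha
  set b : ℝ := x0 ⟨n - 1, by omega⟩ with hb
  set y : Fin n → ℝ := fun i =>
    (1 - (K1⁻¹ + (i.val : ℝ)) / D) * a + ((K1⁻¹ + (i.val : ℝ)) / D) * b with hy
  have hyval : ∀ (k : ℕ) (hk : k < n),
      y ⟨k, hk⟩ = (1 - (K1⁻¹ + (k:ℝ)) / D) * a + ((K1⁻¹ + (k:ℝ)) / D) * b := fun _ _ => rfl
  -- values of d and K at the endpoints
  have hd0 : d ⟨0, hn0⟩ = 1 := by rw [hd]; exact if_pos (Or.inl rfl)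
  have hK0 : K ⟨0, hn0⟩ = K1 := hKfirst
  have hdl : d ⟨n - 1, hlt⟩ = 1 := by rw [hd]; exact if_pos (Or.inr rfl)
  have hKl : K ⟨n - 1, hlt⟩ = Kn := hKlast
  have hdint : ∀ i : Fin n, i.val ≠ 0 → i.val ≠ n - 1 → d i = 2 := by
    intro i h1 h2; rw [hd]; exact if_neg (by push_neg; exact ⟨h1, h2⟩)
  -- row computation of A.mulVec
  have hrow : ∀ (v : Fin n → ℝ) (i : Fin n),
      A.mulVec v i = (1 / (d i + K i)) * (if h : i.val + 1 < n then v ⟨i.val + 1, h⟩ else 0)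
        + (1 / (d i + K i)) * (if h : 0 < i.val then v ⟨i.val - 1, by omega⟩ else 0) := by
    intro v i
    have hsplit : ∀ j : Fin n, A i j * v j =
        (if i.val + 1 = j.val then (1/(d i + K i)) * v j else 0)
      + (if j.val + 1 = i.val then (1/(d i + K i)) * v j else 0) := by
      intro j
      rw [hA]
      by_cases h1 : i.val + 1 = j.val <;> by_cases h2 : j.val + 1 = i.val
      · omega
      · simp [h1, h2]
      · simp [h1, h2]
      · simp [h1, h2]
    simp only [Matrix.mulVec, dotProduct, hsplit, Finset.sum_add_distrib]
    congr 1
    · by_cases h : i.val + 1 < n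
      · rw [dif_pos h, Finset.sum_eq_single_of_mem (⟨i.val + 1, h⟩ : Fin n) (mem_univ _)]
        · rw [if_pos rfl]
        · intro c _ hc
          rw [if_neg]
          intro hc'
          exact hc (Fin.ext hc'.symm)
      · rw [dif_neg h, mul_zero, Finset.sum_eq_zero]
        intro c _
        rw [if_neg]
        omega
    · by_cases h : 0 < i.val
      · rw [dif_pos h, Finset.sum_eq_single_of_mem (⟨i.val - 1, by omega⟩ : Fin n) (mem_univ _)]
        · rw [if_pos (show (⟨i.val - 1, by omega⟩ : Fin n).val + 1 = i.val by
            show i.val - 1 + 1 = i.val; omega)]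
        · intro c _ hc
          rw [if_neg]
          intro hc'
          exact hc (Fin.ext (show c.val = i.val - 1 by omega))
      · rw [dif_neg h, mul_zero, Finset.sum_eq_zero]
        intro c _
        rw [if_neg]
        omega
  -- row computation of B.mulVec
  have hBrow : ∀ i : Fin n, B.mulVec x0 i = K i / (d i + K i) * x0 i := by
    intro i
    simp only [Matrix.mulVec, dotProduct, hB, ite_mul, zero_mul, Finset.sum_ite_eq,
      mem_univ, if_true]
  -- the key equation : (1 - A) y = B x0
  have hkey : (1 - A).mulVec y = B.mulVec x0 := by
    funext i
    rw [Matrix.sub_mulVec, Matrix.one_mulVec, Pi.sub_apply, hrow, hBrow]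
    by_cases h0 : i.val = 0
    · have hieq : i = ⟨0, hn0⟩ := Fin.ext h0
      subst hieq
      rw [hK0, hd0, dif_pos (show (0:ℕ) + 1 < n by omega), dif_neg (show ¬ (0:ℕ) < 0 by omega)]
      rw [hyval 0 hn0, hyval (0 + 1) (show (0:ℕ) + 1 < n by omega)]
      have hxa : x0 (⟨0, hn0⟩ : Fin n) = a := rfl
      rw [hxa]
      push_cast
      field_simp
      ring
    · by_cases hl : i.val = n - 1
      · have hieq : i = ⟨n - 1, hlt⟩ := Fin.ext hl
        subst hieq
        rw [hKl, hdl, dif_neg (show ¬ (n - 1 + 1 < n) by omega),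
          dif_pos (show 0 < n - 1 by omega)]
        rw [hyval (n - 1) hlt, hyval (n - 1 - 1) (by omega)]
        have hxb : x0 (⟨n - 1, hlt⟩ : Fin n) = b := rfl
        rw [hxb]
        have c1 : ((n - 1 : ℕ) : ℝ) = D - K1⁻¹ - Kn⁻¹ := by
          rw [Nat.cast_sub (by omega : 1 ≤ n), hDdef]; push_cast; ring
        have c2 : ((n - 1 - 1 : ℕ) : ℝ) = D - K1⁻¹ - Kn⁻¹ - 1 := by
          rw [show n - 1 - 1 = n - 2 by omega, Nat.cast_sub (by omega : 2 ≤ n), hDdef]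
          push_cast; ring
        rw [c1, c2]
        field_simp
        ring
      · -- interior vertex
        rw [hKmid i h0 hl, hdint i h0 hl]
        rw [dif_pos (by omega : i.val + 1 < n), dif_pos (by omega : 0 < i.val)]
        rw [hyval (i.val + 1) (by omega), hyval (i.val - 1) (by omega)]
        have c1 : ((i.val + 1 : ℕ) : ℝ) = (i.val : ℝ) + 1 := by push_cast; ring
        have c2 : ((i.val - 1 : ℕ) : ℝ) = (i.val : ℝ) - 1 := by
          rw [Nat.cast_sub (by omega : 1 ≤ i.val)]; norm_num
        rw [c1, c2]
        simp only [hy]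
        rw [zero_div, zero_mul]
        field_simp
        ring
  -- (1 - A) has trivial kernel
  have hker : ∀ v : Fin n → ℝ, (1 - A).mulVec v = 0 → v = 0 := by
    intro v hv
    have hrow' : ∀ i : Fin n, v i =
        (1 / (d i + K i)) * (if h : i.val + 1 < n then v ⟨i.val + 1, h⟩ else 0)
        + (1 / (d i + K i)) * (if h : 0 < i.val then v ⟨i.val - 1, by omega⟩ else 0) := by
      intro i
      have h := congrFun hv i
      rw [Matrix.sub_mulVec, Matrix.one_mulVec, Pi.sub_apply, hrow, Pi.zero_apply,
        sub_eq_zero] at h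
      exact h
    have claim : ∀ k : ℕ, ∀ h : k < n,
        v ⟨k, h⟩ = (1 + (k:ℝ) * K1) * v ⟨0, hn0⟩ := by
      intro k
      induction k using Nat.strong_induction_on with
      | _ k ih =>
        intro h
        match k, h with
        | 0, h => push_cast; rw [zero_mul, add_zero, one_mul]
        | 1, h =>
          have h0 := hrow' ⟨0, hn0⟩
          rw [hd0, hK0, dif_pos (show (0:ℕ) + 1 < n by omega),
            dif_neg (show ¬ (0:ℕ) < 0 by omega), mul_zero, add_zero] at h0
          have e : (⟨0 + 1, show (0:ℕ) + 1 < n by omega⟩ : Fin n) = ⟨1, h⟩ := rfl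
          rw [e] at h0
          rw [h0]
          push_cast
          field_simp
          try ring
        | (m + 2), h =>
          have hm1 : m + 1 < n := by omega
          have hmid := hrow' ⟨m + 1, hm1⟩
          rw [hKmid ⟨m + 1, hm1⟩ (show m + 1 ≠ 0 by omega) (show m + 1 ≠ n - 1 by omega),
            hdint ⟨m + 1, hm1⟩ (show m + 1 ≠ 0 by omega) (show m + 1 ≠ n - 1 by omega)] at hmid
          rw [dif_pos (show m + 1 + 1 < n from h), dif_pos (show 0 < m + 1 by omega)] at hmid
          have e2 : (⟨m + 1 + 1, h⟩ : Fin n) = ⟨m + 2, h⟩ := rfl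
          have e0 : (⟨m + 1 - 1, by omega⟩ : Fin n) = ⟨m, by omega⟩ := rfl
          rw [e2, e0] at hmid
          have v1 : v ⟨m + 1, hm1⟩ = (1 + ((m:ℝ) + 1) * K1) * v ⟨0, hn0⟩ := by
            have := ih (m + 1) (by omega) hm1
            push_cast at this
            exact this
          have v0 : v ⟨m, by omega⟩ = (1 + (m:ℝ) * K1) * v ⟨0, hn0⟩ := ih m (by omega) (by omega)
          rw [v1, v0] at hmid
          have hvm2 : v ⟨m + 2, h⟩ = 2 * ((1 + ((m:ℝ) + 1) * K1) * v ⟨0, hn0⟩)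
              - (1 + (m:ℝ) * K1) * v ⟨0, hn0⟩ := by
            rw [show (2:ℝ) + 0 = 2 by norm_num] at hmid
            linarith
          rw [hvm2]
          push_cast
          ring
    -- the last row forces v 0 = 0
    have hlast := hrow' ⟨n - 1, hlt⟩
    rw [hKl, hdl, dif_neg (show ¬ (n - 1 + 1 < n) by omega),
      dif_pos (show 0 < n - 1 by omega), mul_zero, zero_add] at hlast
    have e1 : v ⟨n - 1, hlt⟩ = (1 + ((n:ℝ) - 1) * K1) * v ⟨0, hn0⟩ := by
      rw [claim (n - 1) hlt, Nat.cast_sub (by omega : 1 ≤ n)]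
      norm_num
    have e2 : v ⟨n - 1 - 1, by omega⟩ = (1 + ((n:ℝ) - 2) * K1) * v ⟨0, hn0⟩ := by
      rw [claim (n - 1 - 1) (by omega), show n - 1 - 1 = n - 2 by omega,
        Nat.cast_sub (by omega : 2 ≤ n)]
      norm_num
    rw [e1, e2] at hlast
    have hmul : (1 + Kn) * ((1 + ((n:ℝ) - 1) * K1) * v ⟨0, hn0⟩)
        = (1 + ((n:ℝ) - 2) * K1) * v ⟨0, hn0⟩ := by
      rw [hlast]
      field_simp
    have hcoef : 0 < K1 + Kn + ((n:ℝ) - 1) * K1 * Kn := by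
      have hp : (0:ℝ) < ((n:ℝ) - 1) * K1 * Kn := by
        apply mul_pos (mul_pos _ hK1) hKn
        linarith
      linarith
    have hv0 : v ⟨0, hn0⟩ = 0 := by
      have heq : (K1 + Kn + ((n:ℝ) - 1) * K1 * Kn) * v ⟨0, hn0⟩ = 0 := by
        linear_combination hmul
      exact (mul_eq_zero.mp heq).resolve_left (ne_of_gt hcoef)
    funext i
    have hh := claim i.val i.isLt
    rw [Fin.eta] at hh
    rw [hh, hv0, mul_zero]
    rfl
  -- invertibility of (1 - A)
  have hUnit : IsUnit (1 - A) := by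
    rw [← Matrix.mulVec_injective_iff_isUnit]
    intro u w huw
    have hz : (1 - A).mulVec (u - w) = 0 := by
      rw [Matrix.mulVec_sub, huw, sub_self]
    exact sub_eq_zero.mp (hker _ hz)
  have hdet : IsUnit (1 - A).det := (Matrix.isUnit_iff_isUnit_det _).mp hUnit
  -- conclude
  have hxy : xinf = y := by
    rw [hxinf, ← Matrix.mulVec_mulVec, ← hkey, Matrix.mulVec_mulVec,
      Matrix.nonsing_inv_mul _ hdet, Matrix.one_mulVec]
  intro i
  rw [hxy]
end

section
/- Consider the best-response opinion dynamics on the complete graph K_n (n ≥ 3), where agent 1 is partially stubborn with parameter K₁ > 0 and all other agents have K_i = 0. Let λ_A be the largest eigenvalue of the matrix A. Then the convergence time T = 1/(1 − λ_A) satisfies T ≤ 2 · max{ (K₁ + (n−1) + 2(n−1)²)/K₁ , n−1 }; in particular T ≤ 2(K₁ + (n−1) + 2(n−1)²)/K₁ whenever K₁ ≤ ((n−1) + 2(n−1)²)/(n−2), and T ≤ 2(n−1) otherwise. -/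
open Matrix Finset

private lemma stmt18_aux (m K1 lamA : ℝ) (hm2 : 2 ≤ m) (hK1 : 0 < K1)
    (hlam0 : 0 ≤ lamA) (hI : (1 - lamA) * (1 + m * lamA) * (m + K1) = K1) :
    (K1 * (m - 1) ≤ m + 2 * m ^ 2 → 1 / (1 - lamA) ≤ 2 * (K1 + m + 2 * m ^ 2) / K1) ∧
    (m + 2 * m ^ 2 ≤ K1 * (m - 1) → 1 / (1 - lamA) ≤ 2 * m) := by
  have hm0 : 0 < m := by linarith
  have hmK : 0 < m + K1 := by linarith
  have ht : 0 < 1 + m * lamA := by nlinarith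
  have h1lam : 0 < 1 - lamA := by
    rcases lt_or_ge 0 (1 - lamA) with h | h
    · exact h
    · exfalso; nlinarith [mul_pos ht hmK]
  have hlam1 : lamA < 1 := by linarith
  have hT : 1 / (1 - lamA) = (1 + m * lamA) * (m + K1) / K1 := by
    rw [div_eq_div_iff h1lam.ne' hK1.ne']
    linear_combination -hI
  have htm : (1 + m * lamA) * (m + K1) ≤ (1 + m) * (m + K1) := by
    have : m * lamA ≤ m := by nlinarith
    nlinarith
  constructor
  · intro h
    rw [hT, div_le_div_iff_of_pos_right hK1]
    nlinarith [htm]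
  · intro h
    rw [hT, div_le_iff₀ hK1]
    nlinarith [htm]

/-- On the complete graph `K_n` (`n ≥ 3`) with a single partially
stubborn agent `0` with parameter `K₁ > 0`, the convergence time `T = 1/(1 − λ_A)`
satisfies `T ≤ 2·max{(K₁ + (n−1) + 2(n−1)²)/K₁, n−1}`; in particular
`T ≤ 2(K₁ + (n−1) + 2(n−1)²)/K₁` when `K₁ ≤ ((n−1) + 2(n−1)²)/(n−2)`, and `T ≤ 2(n−1)`
otherwise. -/
theorem stmt18 {n : ℕ} [NeZero n] (hn : 3 ≤ n) (K1 : ℝ) (hK1 : 0 < K1)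
    (K : Fin n → ℝ) (hK0 : K 0 = K1) (hKrest : ∀ i : Fin n, i ≠ 0 → K i = 0)
    (A : Matrix (Fin n) (Fin n) ℝ)
    (hA : ∀ i j : Fin n, A i j = if i ≠ j then 1 / (((n : ℝ) - 1) + K i) else 0)
    (lamA : ℝ) (hmem : lamA ∈ spectrum ℝ A) (hub : ∀ μ ∈ spectrum ℝ A, |μ| ≤ lamA) :
    1 / (1 - lamA)
        ≤ 2 * max ((K1 + ((n : ℝ) - 1) + 2 * ((n : ℝ) - 1) ^ 2) / K1) ((n : ℝ) - 1) ∧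
    (K1 ≤ (((n : ℝ) - 1) + 2 * ((n : ℝ) - 1) ^ 2) / ((n : ℝ) - 2) →
      1 / (1 - lamA) ≤ 2 * (K1 + ((n : ℝ) - 1) + 2 * ((n : ℝ) - 1) ^ 2) / K1) ∧
    ((((n : ℝ) - 1) + 2 * ((n : ℝ) - 1) ^ 2) / ((n : ℝ) - 2) < K1 →
      1 / (1 - lamA) ≤ 2 * ((n : ℝ) - 1)) := by
  have hnR : (3 : ℝ) ≤ (n : ℝ) := by exact_mod_cast hn
  set m : ℝ := (n : ℝ) - 1 with hmdef
  have hm2 : 2 ≤ m := by linarith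
  have hm0 : 0 < m := by linarith
  have hm1 : 0 < m - 1 := by linarith
  have hmK : 0 < m + K1 := by linarith
  have hn2 : (n : ℝ) - 2 = m - 1 := by rw [hmdef]; ring
  have hlam0 : 0 ≤ lamA := le_trans (abs_nonneg lamA) (hub lamA hmem)
  -- eigenvector
  rw [spectrum.mem_iff] at hmem
  have hdet : (algebraMap ℝ (Matrix (Fin n) (Fin n) ℝ) lamA - A).det = 0 := by
    by_contra h
    exact hmem ((Matrix.isUnit_iff_isUnit_det _).mpr (isUnit_iff_ne_zero.mpr h))
  obtain ⟨v, hvne, hv⟩ := Matrix.exists_mulVec_eq_zero_iff.mpr hdet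
  have hAv : ∀ i, (∑ j, A i j * v j) = lamA * v i := by
    intro i
    have h1 : (algebraMap ℝ (Matrix (Fin n) (Fin n) ℝ) lamA - A) *ᵥ v
        = lamA • v - A *ᵥ v := by
      rw [Matrix.sub_mulVec, Algebra.algebraMap_eq_smul_one, Matrix.smul_mulVec,
        Matrix.one_mulVec]
    rw [h1] at hv
    have h2 := congrFun hv i
    simp only [Pi.sub_apply, Pi.smul_apply, smul_eq_mul, Pi.zero_apply, sub_eq_zero] at h2
    rw [h2]
    simp [Matrix.mulVec, dotProduct]
  set S : ℝ := ∑ j, v j with hSdef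
  have row : ∀ (i : Fin n) (c : ℝ),
      (∑ j, (if i ≠ j then c else 0) * v j) = c * S - c * v i := by
    intro i c
    have h1 : ∀ j : Fin n, (if i ≠ j then c else 0) * v j
        = c * v j - (if i = j then c * v j else 0) := by
      intro j; by_cases h : i = j <;> simp [h]
    rw [Finset.sum_congr rfl fun j _ => h1 j, Finset.sum_sub_distrib, ← Finset.mul_sum,
      Finset.sum_ite_eq, if_pos (Finset.mem_univ i), ← hSdef]
  have geneq : ∀ i : Fin n, (1 / (m + K i)) * S - (1 / (m + K i)) * v i = lamA * v i := by
    intro i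
    have h := hAv i
    rw [show (∑ j, A i j * v j) = ∑ j, (if i ≠ j then (1 / (m + K i)) else 0) * v j from
      Finset.sum_congr rfl fun j _ => by rw [hA], row i (1 / (m + K i))] at h
    exact h
  have ht : 0 < 1 + m * lamA := by nlinarith
  -- off-row equations
  have hvi : ∀ i : Fin n, i ≠ 0 → v i * (1 + m * lamA) = S := by
    intro i hi
    have h := geneq i
    rw [hKrest i hi, add_zero] at h
    have h' : S - v i = m * (lamA * v i) := by
      field_simp at h
      linarith
    linear_combination -h'
  -- sum over all rows
  have hcard : ((Finset.univ.erase (0 : Fin n)).card : ℝ) = m := by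
    rw [Finset.card_erase_of_mem (Finset.mem_univ _), Finset.card_univ, Fintype.card_fin]
    rw [hmdef]
    have h1 : 1 ≤ n := by omega
    push_cast [Nat.cast_sub h1]
    ring
  have hv0t : v 0 * (1 + m * lamA) = S * (1 + m * lamA) - m * S := by
    have h1 : (∑ j ∈ Finset.univ.erase (0 : Fin n), v j) + v 0 = S :=
      Finset.sum_erase_add _ _ (Finset.mem_univ 0)
    have h2 : ∑ j ∈ Finset.univ.erase (0 : Fin n), v j * (1 + m * lamA)
        = ∑ _j ∈ Finset.univ.erase (0 : Fin n), S :=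
      Finset.sum_congr rfl fun j hj => hvi j (Finset.ne_of_mem_erase hj)
    rw [Finset.sum_const, nsmul_eq_mul, hcard] at h2
    have h3 : (∑ j ∈ Finset.univ.erase (0 : Fin n), v j) * (1 + m * lamA) = m * S := by
      rw [Finset.sum_mul, h2]
    linear_combination (1 + m * lamA) * h1 - h3
  -- S ≠ 0
  have hSne : S ≠ 0 := by
    intro hS0
    apply hvne
    funext i
    by_cases hi : i = 0
    · subst hi
      have := hv0t
      rw [hS0] at this
      simp at this
      rcases this with h | h
      · exact h
      · linarith
    · have := hvi i hi
      rw [hS0] at this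
      rcases mul_eq_zero.mp this with h | h
      · exact h
      · linarith
  -- row 0 equation
  have eq0 : (1 / (m + K1)) * S - (1 / (m + K1)) * v 0 = lamA * v 0 := by
    have h := geneq 0
    rwa [hK0] at h
  have eq0' : S - v 0 = (m + K1) * (lamA * v 0) := by
    field_simp at eq0
    linarith
  have h3 : (m + K1) * lamA * ((1 + m * lamA) - m) * S = m * S := by
    linear_combination (-(1 + m * lamA)) * eq0' - (1 + (m + K1) * lamA) * hv0t
  have hE : (m + K1) * lamA * ((1 + m * lamA) - m) = m := mul_right_cancel₀ hSne h3
  have hI : (1 - lamA) * (1 + m * lamA) * (m + K1) = K1 := by linear_combination -hE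
  obtain ⟨hb1, hb2⟩ := stmt18_aux m K1 lamA hm2 hK1 hlam0 hI
  refine ⟨?_, ?_, ?_⟩
  · rcases le_total (K1 * (m - 1)) (m + 2 * m ^ 2) with h | h
    · calc 1 / (1 - lamA) ≤ 2 * (K1 + m + 2 * m ^ 2) / K1 := hb1 h
        _ ≤ 2 * max ((K1 + m + 2 * m ^ 2) / K1) m := by
            rw [mul_div_assoc]
            exact mul_le_mul_of_nonneg_left (le_max_left _ _) (by norm_num)
    · calc 1 / (1 - lamA) ≤ 2 * m := hb2 h
        _ ≤ 2 * max ((K1 + m + 2 * m ^ 2) / K1) m :=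
            mul_le_mul_of_nonneg_left (le_max_right _ _) (by norm_num)
  · intro h
    rw [hn2] at h
    exact hb1 ((le_div_iff₀ hm1).mp h)
  · intro h
    rw [hn2] at h
    exact hb2 (le_of_lt ((div_lt_iff₀ hm1).mp h))
end
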